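/- arXiv:2105.01425 — 4 statements merged into one kernel-verified Lean document; each statement's English description precedes it below -/
import Mathlib

section
/- Suppose all client weights are natural numbers. In any client equilibrium σ with k facilities, every facility load is a rational number of the form x/y with x, y natural numbers, x at most the total weight of all clients, and 1 ≤ y ≤ k. -/
open Finset

/-- Load of facility `j` under weight distribution `σ`. -/
def load {n k : ℕ} (σ : Fin n → Fin k → ℝ) (j : Fin k) : ℝ := ∑ i, σ i j

/-- A feasible client weight distribution: nonnegative, supported on accessible
facilities, and clients with a nonempty accessible set distribute their full weight. -/
def Feasible {n k : ℕ} (w : Fin n → ℝ) (N : Fin n → Finset (Fin k))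
    (σ : Fin n → Fin k → ℝ) : Prop :=
  (∀ i j, 0 ≤ σ i j) ∧
  (∀ i j, j ∉ N i → σ i j = 0) ∧
  (∀ i, (N i).Nonempty → ∑ j ∈ N i, σ i j = w i)

/-- Client equilibrium: no client puts positive weight on a facility while a
strictly less loaded accessible facility exists. -/
def ClientEq {n k : ℕ} (w : Fin n → ℝ) (N : Fin n → Finset (Fin k))
    (σ : Fin n → Fin k → ℝ) : Prop :=
  Feasible w N σ ∧
  ∀ i : Fin n, ∀ j ∈ N i, ∀ j' ∈ N i, 0 < σ i j → load σ j ≤ load σ j'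

/-!
Call two facilities adjacent when some client puts positive weight on both. In equilibrium such a
client makes the two loads equal, so loads are constant on each connected component `S` of this
relation. Every client either places all of her weight inside `S` or none of it, so the total load
`#S * ℓ` of `S` is a sum of client weights, a natural number at most `∑ i, w i`, while
`1 ≤ #S ≤ k`.
-/

section Components

variable {n k : ℕ} {w : Fin n → ℝ} {N : Fin n → Finset (Fin k)} {σ : Fin n → Fin k → ℝ}

def SharesClient (σ : Fin n → Fin k → ℝ) (a b : Fin k) : Prop :=
  ∃ i, 0 < σ i a ∧ 0 < σ i b

open Classical in
noncomputable def facilityComponent (σ : Fin n → Fin k → ℝ) (j : Fin k) : Finset (Fin k) :=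
  univ.filter (Relation.ReflTransGen (SharesClient σ) j)

open Classical in
noncomputable def componentClients (σ : Fin n → Fin k → ℝ) (j : Fin k) : Finset (Fin n) :=
  univ.filter fun i => ∃ b ∈ facilityComponent σ j, 0 < σ i b

theorem mem_facilityComponent {j b : Fin k} :
    b ∈ facilityComponent σ j ↔ Relation.ReflTransGen (SharesClient σ) j b := by
  classical
  simp [facilityComponent]

theorem mem_facilityComponent_self (σ : Fin n → Fin k → ℝ) (j : Fin k) :
    j ∈ facilityComponent σ j :=
  mem_facilityComponent.mpr .refl

theorem mem_facilityComponent_of_pos {i : Fin n} {j b c : Fin k}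
    (hb : b ∈ facilityComponent σ j) (hib : 0 < σ i b) (hic : 0 < σ i c) :
    c ∈ facilityComponent σ j :=
  mem_facilityComponent.mpr ((mem_facilityComponent.mp hb).tail ⟨i, hib, hic⟩)

theorem Feasible.mem_of_pos (hf : Feasible w N σ) {i : Fin n} {a : Fin k} (ha : 0 < σ i a) :
    a ∈ N i := by
  by_contra h
  exact ha.ne' (hf.2.1 i a h)

theorem Feasible.sum_eq_of_pos (hf : Feasible w N σ) {i : Fin n} {b : Fin k} {S : Finset (Fin k)}
    (hS : ∀ c, 0 < σ i c → c ∈ S) (hb : 0 < σ i b) :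
    ∑ c ∈ S, σ i c = w i := by
  have hzero : ∀ c, c ∉ S → σ i c = 0 := fun c hc =>
    ((hf.1 i c).lt_or_eq.resolve_left fun h => hc (hS c h)).symm
  calc ∑ c ∈ S, σ i c = ∑ c, σ i c := sum_subset (subset_univ S) fun c _ => hzero c
    _ = ∑ c ∈ N i, σ i c := (sum_subset (subset_univ (N i)) fun c _ => hf.2.1 i c).symm
    _ = w i := hf.2.2 i ⟨b, hf.mem_of_pos hb⟩

theorem ClientEq.load_eq_of_sharesClient (he : ClientEq w N σ) {a b : Fin k}
    (hab : SharesClient σ a b) : load σ a = load σ b := by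
  obtain ⟨i, ha, hb⟩ := hab
  have haN := he.1.mem_of_pos ha
  have hbN := he.1.mem_of_pos hb
  exact le_antisymm (he.2 i a haN b hbN ha) (he.2 i b hbN a haN hb)

theorem ClientEq.load_eq_of_mem_facilityComponent (he : ClientEq w N σ) {j b : Fin k}
    (hb : b ∈ facilityComponent σ j) : load σ b = load σ j := by
  rw [mem_facilityComponent] at hb
  induction hb with
  | refl => rfl
  | tail _ hbc ih => rw [← he.load_eq_of_sharesClient hbc, ih]

theorem ClientEq.card_mul_load (he : ClientEq w N σ) (j : Fin k) :
    #(facilityComponent σ j) * load σ j = ∑ i ∈ componentClients σ j, w i := by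
  classical
  set S := facilityComponent σ j
  have houtside : ∀ i ∉ componentClients σ j, ∑ b ∈ S, σ i b = 0 := by
    intro i hi
    simp only [componentClients, mem_filter, mem_univ, true_and, not_exists, not_and,
      not_lt] at hi
    exact sum_eq_zero fun b hb => le_antisymm (hi b hb) (he.1.1 i b)
  have hinside : ∀ i ∈ componentClients σ j, ∑ b ∈ S, σ i b = w i := by
    intro i hi
    simp only [componentClients, mem_filter, mem_univ, true_and] at hi
    obtain ⟨b, hbS, hb⟩ := hi
    exact he.1.sum_eq_of_pos (fun c hc => mem_facilityComponent_of_pos hbS hb hc) hb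
  calc #S * load σ j = ∑ b ∈ S, load σ b := by
        rw [sum_congr rfl fun b hb => he.load_eq_of_mem_facilityComponent hb, sum_const,
          nsmul_eq_mul]
    _ = ∑ i, ∑ b ∈ S, σ i b := sum_comm
    _ = ∑ i ∈ componentClients σ j, ∑ b ∈ S, σ i b :=
        (sum_subset (subset_univ _) fun i _ hi => houtside i hi).symm
    _ = ∑ i ∈ componentClients σ j, w i := sum_congr rfl hinside

end Components

theorem equilibrium_loads_limited_values_general (n k : ℕ)
    (w : Fin n → ℕ) (N : Fin n → Finset (Fin k))
    (σ : Fin n → Fin k → ℝ) (heq : ClientEq (fun i => (w i : ℝ)) N σ) :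
    ∀ j : Fin k, ∃ x y : ℕ, x ≤ ∑ i, w i ∧ 1 ≤ y ∧ y ≤ k ∧
      load σ j = (x : ℝ) / (y : ℝ) := by
  intro j
  have hcard : 0 < #(facilityComponent σ j) := card_pos.mpr ⟨j, mem_facilityComponent_self σ j⟩
  refine ⟨∑ i ∈ componentClients σ j, w i, #(facilityComponent σ j),
    sum_le_sum_of_subset (subset_univ _), hcard, (card_le_univ _).trans_eq (Fintype.card_fin k),
    ?_⟩
  rw [eq_div_iff (by positivity), mul_comm, heq.card_mul_load]
  push_cast
  rfl

/-- With natural-number client weights, every equilibrium facility load has the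
form `x / y` with `x` at most the total weight and `1 ≤ y ≤ k`. -/
theorem equilibrium_loads_limited_values (n k : ℕ)
    (w : Fin n → ℕ) (hw : ∀ i, 0 < w i) (N : Fin n → Finset (Fin k))
    (σ : Fin n → Fin k → ℝ) (heq : ClientEq (fun i => (w i : ℝ)) N σ) :
    ∀ j : Fin k, ∃ x y : ℕ, x ≤ ∑ i, w i ∧ 1 ≤ y ∧ y ≤ k ∧
      load σ j = (x : ℝ) / (y : ℝ) :=
  equilibrium_loads_limited_values_general n k w N σ heq
end

section
/- In every client equilibrium σ, every facility's load is at least the minimum neighborhood ratio: ℓ_j(σ) ≥ min over nonempty T ⊆ F of w(A(T))/|T|, for all facilities j. -/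
open Finset

/-- Total weight of the attraction set of a facility set `T`: clients having an
accessible facility in `T`. -/
def wA {n k : ℕ} (w : Fin n → ℝ) (N : Fin n → Finset (Fin k))
    (T : Finset (Fin k)) : ℝ :=
  ∑ i ∈ Finset.univ.filter (fun i => (N i ∩ T).Nonempty), w i

/-!
Let `T` be the set of facilities whose load is at most `ℓ_j`. A client with an accessible
facility in `T` puts no weight outside `T`, since every facility outside `T` is strictly more
loaded than that one. Hence `w(A(T))` is at most the total load of `T`, which is at most
`|T| ℓ_j`, and `T` contains `j`.
-/

noncomputable def loadSublevel {n k : ℕ} (σ : Fin n → Fin k → ℝ) (c : ℝ) : Finset (Fin k) :=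
  univ.filter fun j => load σ j ≤ c

lemma mem_loadSublevel {n k : ℕ} {σ : Fin n → Fin k → ℝ} {c : ℝ} {j : Fin k} :
    j ∈ loadSublevel σ c ↔ load σ j ≤ c := by
  simp [loadSublevel]

lemma sum_load_loadSublevel_le {n k : ℕ} (σ : Fin n → Fin k → ℝ) (c : ℝ) :
    ∑ j ∈ loadSublevel σ c, load σ j ≤ #(loadSublevel σ c) * c := by
  simpa using sum_le_card_nsmul _ _ c fun j hj => mem_loadSublevel.mp hj

namespace ClientEq

variable {n k : ℕ} {w : Fin n → ℝ} {N : Fin n → Finset (Fin k)} {σ : Fin n → Fin k → ℝ}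

lemma eq_zero_of_load_lt (h : ClientEq w N σ) {i : Fin n} {j j' : Fin k}
    (hj : j ∈ N i) (hj' : j' ∈ N i) (hlt : load σ j' < load σ j) : σ i j = 0 := by
  by_contra hne
  have hpos : 0 < σ i j := lt_of_le_of_ne (h.1.1 i j) (Ne.symm hne)
  exact (h.2 i j hj j' hj' hpos).not_gt hlt

lemma weight_le_sum_loadSublevel (h : ClientEq w N σ) (c : ℝ) {i : Fin n}
    (hi : (N i ∩ loadSublevel σ c).Nonempty) :
    w i ≤ ∑ j ∈ loadSublevel σ c, σ i j := by
  obtain ⟨j₀, hj₀⟩ := hi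
  rw [mem_inter, mem_loadSublevel] at hj₀
  have hout : ∀ j ∈ N i, j ∉ N i ∩ loadSublevel σ c → σ i j = 0 := by
    intro j hj hjT
    rw [mem_inter, mem_loadSublevel, not_and, not_le] at hjT
    exact h.eq_zero_of_load_lt hj hj₀.1 (hj₀.2.trans_lt (hjT hj))
  calc w i = ∑ j ∈ N i, σ i j := (h.1.2.2 i ⟨j₀, hj₀.1⟩).symm
    _ = ∑ j ∈ N i ∩ loadSublevel σ c, σ i j := (sum_subset inter_subset_left hout).symm
    _ ≤ ∑ j ∈ loadSublevel σ c, σ i j :=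
      sum_le_sum_of_subset_of_nonneg inter_subset_right fun j _ _ => h.1.1 i j

lemma wA_loadSublevel_le_sum_load (h : ClientEq w N σ) (c : ℝ) :
    wA w N (loadSublevel σ c) ≤ ∑ j ∈ loadSublevel σ c, load σ j := by
  set T := loadSublevel σ c
  calc wA w N T ≤ ∑ i ∈ univ.filter (fun i => (N i ∩ T).Nonempty), ∑ j ∈ T, σ i j :=
        sum_le_sum fun i hi => h.weight_le_sum_loadSublevel c (mem_filter.mp hi).2
    _ ≤ ∑ i, ∑ j ∈ T, σ i j :=
        sum_le_sum_of_subset_of_nonneg (filter_subset _ _)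
          fun i _ _ => sum_nonneg fun j _ => h.1.1 i j
    _ = ∑ j ∈ T, load σ j := sum_comm

end ClientEq

lemma sInf_neighborhoodRatio_le {n k : ℕ} (w : Fin n → ℝ) (N : Fin n → Finset (Fin k))
    {T : Finset (Fin k)} (hT : T.Nonempty) :
    sInf {x : ℝ | ∃ T : Finset (Fin k), T.Nonempty ∧ x = wA w N T / (T.card : ℝ)}
      ≤ wA w N T / (T.card : ℝ) := by
  have hfin : {x : ℝ | ∃ T : Finset (Fin k), T.Nonempty ∧ x = wA w N T / (T.card : ℝ)}.Finite :=
    (Set.finite_range fun T : Finset (Fin k) => wA w N T / (T.card : ℝ)).subset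
      fun _ ⟨S, _, hx⟩ => ⟨S, hx.symm⟩
  exact csInf_le hfin.bddBelow ⟨T, hT, rfl⟩

theorem equilibrium_load_at_least_MNR_general (n k : ℕ)
    (w : Fin n → ℝ) (N : Fin n → Finset (Fin k))
    (σ : Fin n → Fin k → ℝ) (heq : ClientEq w N σ) :
    ∀ j : Fin k,
      sInf {x : ℝ | ∃ T : Finset (Fin k), T.Nonempty ∧ x = wA w N T / (T.card : ℝ)}
        ≤ load σ j := by
  intro j
  set T := loadSublevel σ (load σ j)
  have hT : T.Nonempty := ⟨j, mem_loadSublevel.mpr le_rfl⟩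
  have hcard : (0 : ℝ) < #T := by exact_mod_cast hT.card_pos
  calc _ ≤ wA w N T / #T := sInf_neighborhoodRatio_le w N hT
    _ ≤ load σ j := by
      rw [div_le_iff₀ hcard, mul_comm]
      exact (heq.wA_loadSublevel_le_sum_load _).trans (sum_load_loadSublevel_le σ _)

/-- In every client equilibrium, every facility load is at least the minimum
neighborhood ratio. -/
theorem equilibrium_load_at_least_MNR (n k : ℕ)
    (w : Fin n → ℝ) (hw : ∀ i, 0 < w i) (N : Fin n → Finset (Fin k))
    (σ : Fin n → Fin k → ℝ) (heq : ClientEq w N σ) :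
    ∀ j : Fin k,
      sInf {x : ℝ | ∃ T : Finset (Fin k), T.Nonempty ∧ x = wA w N T / (T.card : ℝ)}
        ≤ load σ j :=
  equilibrium_load_at_least_MNR_general n k w N σ heq
end

section
/- In the load-balancing two-sided facility location game, suppose facility p strictly improves its equilibrium load by relocating from profile s to s' = (s'_p, s_{−p}), with client equilibria σ and σ' respectively. Then every facility q whose load strictly decreases (ℓ_q(s', σ') < ℓ_q(s, σ)) satisfies ℓ_q(s', σ') ≥ ℓ_p(s', σ'). -/
open Finset

/-- Facilities accessible to client `i` under placement `s`. -/
def NsF {n k : ℕ} (E : Fin n → Fin n → Bool) (s : Fin k → Fin n) (i : Fin n) :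
    Finset (Fin k) :=
  Finset.univ.filter (fun j => s j = i ∨ E i (s j) = true)

/-!
Among the facilities whose load decreased, let `T` be those of minimal new load `m`. The total
load on `T` decreased, so some client `i` moved weight from some `q ∈ T` to some `j ∉ T`. The new
equilibrium gives `ℓ'_j ≤ ℓ'_q = m`. If `j ≠ p`, then `j` was accessible to `i` before as well,
and the old equilibrium gives `ℓ_q ≤ ℓ_j`; hence `ℓ'_j ≤ m < ℓ_q ≤ ℓ_j`, so `j` decreased to a
load `≤ m`, i.e. `j ∈ T`, a contradiction. So `j = p` and `ℓ'_p ≤ m`.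
-/

theorem Finset.exists_notMem_lt_of_sum_eq_of_sum_lt {ι M : Type*} [Fintype ι]
    [AddCommGroup M] [LinearOrder M] [IsOrderedAddMonoid M] {f g : ι → M} {T : Finset ι}
    (hsum : ∑ j, f j = ∑ j, g j) (hT : ∑ j ∈ T, f j < ∑ j ∈ T, g j) :
    ∃ j ∉ T, g j < f j := by
  classical
  have hcompl : ∑ j ∈ Tᶜ, g j < ∑ j ∈ Tᶜ, f j := by
    rw [← sum_add_sum_compl T f, ← sum_add_sum_compl T g] at hsum
    by_contra! h
    exact (add_lt_add_of_lt_of_le hT h).ne hsum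
  obtain ⟨j, hj, hlt⟩ := exists_lt_of_sum_lt hcompl
  exact ⟨j, mem_compl.1 hj, hlt⟩

section

variable {n k : ℕ} {w w' : Fin n → ℝ} {N N' : Fin n → Finset (Fin k)}
  {σ σ' : Fin n → Fin k → ℝ} {i : Fin n} {j q : Fin k}

theorem Feasible.mem_of_pos_s14 (h : Feasible w N σ) (hpos : 0 < σ i j) : j ∈ N i := by
  by_contra hj
  exact hpos.ne' (h.2.1 i j hj)

theorem Feasible.sum_eq_of_mem (h : Feasible w N σ) (hj : j ∈ N i) : ∑ j', σ i j' = w i := by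
  rw [← sum_subset (N i).subset_univ fun x _ hx => h.2.1 i x hx]
  exact h.2.2 i ⟨j, hj⟩

theorem ClientEq.load_le (h : ClientEq w N σ) (hpos : 0 < σ i j) (hq : q ∈ N i) :
    load σ j ≤ load σ q :=
  h.2 i j (h.1.mem_of_pos_s14 hpos) q hq hpos

theorem ClientEq.load_le_of_shift (hσ : Feasible w N σ) (hσ' : ClientEq w' N' σ')
    (hq : q ∈ N i → q ∈ N' i) (hout : σ' i q < σ i q) (hin : σ i j < σ' i j) :
    load σ' j ≤ load σ' q :=
  hσ'.load_le ((hσ.1 i j).trans_lt hin) (hq (hσ.mem_of_pos_s14 ((hσ'.1.1 i q).trans_lt hout)))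

theorem exists_client_lt_of_sum_load_lt {T : Finset (Fin k)}
    (h : ∑ j ∈ T, load σ' j < ∑ j ∈ T, load σ j) :
    ∃ i, ∑ j ∈ T, σ' i j < ∑ j ∈ T, σ i j := by
  simp only [load] at h
  rw [sum_comm, sum_comm (s := T)] at h
  simpa using exists_lt_of_sum_lt h

theorem load_le_of_load_decreases {p q₀ : Fin k} (hσ : ClientEq w N σ) (hσ' : ClientEq w N' σ')
    (hN : ∀ i, ∀ j ≠ p, j ∈ N' i ↔ j ∈ N i) (hp : load σ p ≤ load σ' p)
    (hq₀ : load σ' q₀ < load σ q₀) : load σ' p ≤ load σ' q₀ := by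
  classical
  set D := univ.filter fun j => load σ' j < load σ j
  have hmemD : ∀ {j}, j ∈ D ↔ load σ' j < load σ j := by simp [D]
  obtain ⟨qm, hqmD, hmin⟩ := D.exists_min_image (load σ') ⟨q₀, hmemD.2 hq₀⟩
  set T := D.filter fun j => load σ' j = load σ' qm
  have hTsum : ∑ j ∈ T, load σ' j < ∑ j ∈ T, load σ j :=
    sum_lt_sum_of_nonempty ⟨qm, mem_filter.2 ⟨hqmD, rfl⟩⟩
      fun j hj => hmemD.1 (mem_filter.1 hj).1
  obtain ⟨i, hi⟩ := exists_client_lt_of_sum_load_lt hTsum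
  obtain ⟨q, hqT, hout⟩ := exists_lt_of_sum_lt hi
  obtain ⟨hqD, hqm⟩ := mem_filter.1 hqT
  have hqp : q ≠ p := by
    rintro rfl
    exact (hmemD.1 hqD).not_ge hp
  have hqN : q ∈ N i := hσ.1.mem_of_pos_s14 ((hσ'.1.1 i q).trans_lt hout)
  have hsum : ∑ j, σ' i j = ∑ j, σ i j := by
    rw [hσ'.1.sum_eq_of_mem ((hN i q hqp).2 hqN), hσ.1.sum_eq_of_mem hqN]
  obtain ⟨j, hjT, hin⟩ := exists_notMem_lt_of_sum_eq_of_sum_lt hsum hi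
  have hjq : load σ' j ≤ load σ' q := hσ'.load_le_of_shift hσ.1 (hN i q hqp).2 hout hin
  obtain rfl : j = p := by
    by_contra hjp
    have hqj : load σ q ≤ load σ j := hσ.load_le_of_shift hσ'.1 (hN i j hjp).1 hin hout
    have hjD : j ∈ D := hmemD.2 (by linarith [hmemD.1 hqD])
    exact hjT (mem_filter.2 ⟨hjD, le_antisymm (hjq.trans_eq hqm) (hmin j hjD)⟩)
  exact hjq.trans (hqm.trans_le (hmin q₀ (hmemD.2 hq₀)))

end

theorem mem_NsF_update_of_ne {n k : ℕ} {E : Fin n → Fin n → Bool} {s : Fin k → Fin n}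
    {p j : Fin k} (v : Fin n) (i : Fin n) (hj : j ≠ p) :
    j ∈ NsF E (Function.update s p v) i ↔ j ∈ NsF E s i := by
  simp [NsF, Function.update_of_ne hj]

theorem no_load_below_improver_general (n k : ℕ)
    (w : Fin n → ℝ) (E : Fin n → Fin n → Bool)
    (s : Fin k → Fin n) (p : Fin k) (v : Fin n)
    (σ σ' : Fin n → Fin k → ℝ)
    (hσ : ClientEq w (NsF E s) σ)
    (hσ' : ClientEq w (NsF E (Function.update s p v)) σ')
    (himp : load σ p < load σ' p) :
    ∀ q : Fin k, load σ' q < load σ q → load σ' p ≤ load σ' q := fun _ hq =>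
  load_le_of_load_decreases hσ hσ' (fun i _ hj => mem_NsF_update_of_ne v i hj) himp.le hq

/-- If facility `p` strictly improves by relocating, then any facility whose
equilibrium load strictly decreases still has load at least `p`'s new load. -/
theorem no_load_below_improver (n k : ℕ)
    (w : Fin n → ℝ) (hw : ∀ i, 0 < w i) (E : Fin n → Fin n → Bool)
    (s : Fin k → Fin n) (p : Fin k) (v : Fin n)
    (σ σ' : Fin n → Fin k → ℝ)
    (hσ : ClientEq w (NsF E s) σ)
    (hσ' : ClientEq w (NsF E (Function.update s p v)) σ')
    (himp : load σ p < load σ' p) :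
    ∀ q : Fin k, load σ' q < load σ q → load σ' p ≤ load σ' q :=
  no_load_below_improver_general n k w E s p v σ σ' hσ hσ' himp
end

section
/- The load-balancing two-sided facility location game is not a basic utility system: there exists an instance (two mutually adjacent unit-weight clients, each hosting one facility) where removing a facility does not change the coverage welfare, yet the removed facility's equilibrium load is 1 > 0; hence the equality α_p(A) = γ(A) − γ(A ⊖ p) fails. -/
open Finset

/-- Weighted participation rate: total weight of clients covered by `s`. -/
def Wrate {n k : ℕ} (w : Fin n → ℕ) (E : Fin n → Fin n → Bool)
    (s : Fin k → Fin n) : ℕ :=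
  ∑ i ∈ Finset.univ.filter (fun i => (NsF E s i).Nonempty), w i

/-- Total weight of clients still covered after removing facility `p`. -/
def WrateMinus {n k : ℕ} (w : Fin n → ℕ) (E : Fin n → Fin n → Bool)
    (s : Fin k → Fin n) (p : Fin k) : ℕ :=
  ∑ i ∈ Finset.univ.filter (fun i => ∃ j : Fin k, j ≠ p ∧ (s j = i ∨ E i (s j) = true)), w i

section LoadBalancing

variable {n k : ℕ} {w : Fin n → ℝ} {N : Fin n → Finset (Fin k)} {σ : Fin n → Fin k → ℝ}

theorem Feasible.load_nonneg (h : Feasible w N σ) (j : Fin k) : 0 ≤ load σ j :=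
  sum_nonneg fun i _ => h.1 i j

theorem Feasible.sum_load (h : Feasible w N σ) (hN : ∀ i, (N i).Nonempty) :
    ∑ j, load σ j = ∑ i, w i := by
  unfold load
  rw [sum_comm]
  refine sum_congr rfl fun i _ => ?_
  rw [← h.2.2 i (hN i)]
  exact (sum_subset (subset_univ _) fun j _ hj => h.2.1 i j hj).symm

theorem ClientEq.load_le_of_load_pos (h : ClientEq w N σ) (hN : ∀ i, N i = univ)
    {j : Fin k} (hj : 0 < load σ j) (j' : Fin k) : load σ j ≤ load σ j' := by
  obtain ⟨i, -, hi⟩ := exists_lt_of_sum_lt (f := fun _ => (0 : ℝ)) (by simpa [load] using hj)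
  exact h.2 i j (by simp [hN]) j' (by simp [hN]) hi

theorem ClientEq.load_eq_of_forall_eq_univ (h : ClientEq w N σ) (hN : ∀ i, N i = univ)
    (j j' : Fin k) : load σ j = load σ j' := by
  have load_le (a b : Fin k) : load σ a ≤ load σ b := by
    rcases (h.1.load_nonneg a).eq_or_lt with ha | ha
    · exact ha ▸ h.1.load_nonneg b
    · exact h.load_le_of_load_pos hN ha b
  exact (load_le j j').antisymm (load_le j' j)

end LoadBalancing

/-- Not a basic utility system: in the two-client, two-facility instance with
mutually adjacent unit-weight clients and facilities on both vertices, removing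
facility `0` does not change the coverage welfare, yet its equilibrium load is
`1 ≠ 0`, so utility does not equal marginal welfare contribution. -/
theorem not_basic_utility_system :
    ∀ σ : Fin 2 → Fin 2 → ℝ,
      ClientEq (fun _ => (1 : ℝ))
        (NsF (fun i j => decide (i ≠ j)) (id : Fin 2 → Fin 2)) σ →
      load σ 0 = 1 ∧
      Wrate (fun _ => 1) (fun i j => decide (i ≠ j)) (id : Fin 2 → Fin 2) = 2 ∧
      WrateMinus (fun _ => 1) (fun i j => decide (i ≠ j)) (id : Fin 2 → Fin 2) 0 = 2 ∧
      load σ 0 ≠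
        ((Wrate (fun _ => 1) (fun i j => decide (i ≠ j)) (id : Fin 2 → Fin 2) : ℝ) -
          (WrateMinus (fun _ => 1) (fun i j => decide (i ≠ j)) (id : Fin 2 → Fin 2) 0 : ℝ)) := by
  intro σ hσ
  have hN : ∀ i : Fin 2, NsF (fun i j : Fin 2 => decide (i ≠ j)) id i = univ := by decide
  have hsum : load σ 0 + load σ 1 = 2 := by
    simpa [Fin.sum_univ_two, hN] using hσ.1.sum_load fun i => hN i ▸ univ_nonempty
  have hload : load σ 0 = 1 := by
    linarith [hσ.load_eq_of_forall_eq_univ hN 0 1]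
  have hW : Wrate (fun _ => 1) (fun i j : Fin 2 => decide (i ≠ j)) id = 2 := by decide
  have hWM : WrateMinus (fun _ => 1) (fun i j : Fin 2 => decide (i ≠ j)) id 0 = 2 := by decide
  refine ⟨hload, hW, hWM, ?_⟩
  rw [hload, hW, hWM]
  norm_num
end
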